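/- arXiv:2503.07123 — 5 statements merged into one kernel-verified Lean document; each statement's English description precedes it below -/
import Mathlib

section
/- For two exponential densities with rates λ₁ and λ₂, the relative extropy equals d(f,g) = (1/4)(λ₁ + λ₂ - 4λ₁λ₂/(λ₁+λ₂)). -/
open MeasureTheory Set Real

lemma exp_int (b : ℝ) (hb : 0 < b) : ∫ x in Ioi (0:ℝ), Real.exp (-(b * x)) = b⁻¹ := by
  have := integral_comp_mul_left_Ioi (fun y => Real.exp (-y)) 0 hb
  simp only [mul_zero, integral_exp_neg_Ioi_zero, smul_eq_mul, mul_one] at this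
  exact this

lemma exp_intOn (b : ℝ) (hb : 0 < b) :
    IntegrableOn (fun x => Real.exp (-(b * x))) (Ioi (0:ℝ)) := by
  simpa [mul_comm] using exp_neg_integrableOn_Ioi 0 hb

/-- For exponential densities with rates `λ₁, λ₂ > 0`,
`d(f,g) = (1/4)(λ₁ + λ₂ - 4λ₁λ₂/(λ₁+λ₂))`. -/
theorem relative_extropy_exponential (l₁ l₂ : ℝ) (h₁ : 0 < l₁) (h₂ : 0 < l₂) :
    (1/2) * ∫ x in Ioi (0:ℝ),
        (l₁ * Real.exp (-l₁ * x) - l₂ * Real.exp (-l₂ * x)) ^ 2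
      = (1/4) * (l₁ + l₂ - 4 * l₁ * l₂ / (l₁ + l₂)) := by
  have hs : 0 < l₁ + l₂ := by linarith
  have key : ∀ x : ℝ, (l₁ * Real.exp (-l₁ * x) - l₂ * Real.exp (-l₂ * x)) ^ 2
      = l₁^2 * Real.exp (-(2*l₁ * x)) + l₂^2 * Real.exp (-(2*l₂ * x))
        - 2*l₁*l₂ * Real.exp (-((l₁+l₂) * x)) := by
    intro x
    have e1 : Real.exp (-l₁*x) * Real.exp (-l₁*x) = Real.exp (-(2*l₁*x)) := by
      rw [← Real.exp_add]; ring_nf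
    have e2 : Real.exp (-l₂*x) * Real.exp (-l₂*x) = Real.exp (-(2*l₂*x)) := by
      rw [← Real.exp_add]; ring_nf
    have e3 : Real.exp (-l₁*x) * Real.exp (-l₂*x) = Real.exp (-((l₁+l₂)*x)) := by
      rw [← Real.exp_add]; ring_nf
    linear_combination l₁^2*e1 + l₂^2*e2 - 2*l₁*l₂*e3
  rw [show (∫ x in Ioi (0:ℝ), (l₁ * Real.exp (-l₁ * x) - l₂ * Real.exp (-l₂ * x)) ^ 2)
      = ∫ x in Ioi (0:ℝ), (l₁^2 * Real.exp (-(2*l₁ * x)) + l₂^2 * Real.exp (-(2*l₂ * x))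
        - 2*l₁*l₂ * Real.exp (-((l₁+l₂) * x))) from by
    exact setIntegral_congr_fun measurableSet_Ioi fun x _ => key x]
  have i1 := (exp_intOn (2*l₁) (by linarith)).const_mul (l₁^2)
  have i2 := (exp_intOn (2*l₂) (by linarith)).const_mul (l₂^2)
  have i3 := (exp_intOn (l₁+l₂) hs).const_mul (2*l₁*l₂)
  have i12 : Integrable (fun x => l₁^2 * Real.exp (-(2*l₁ * x)) + l₂^2 * Real.exp (-(2*l₂ * x)))
      (volume.restrict (Ioi 0)) := i1.add i2
  rw [integral_sub i12 i3, integral_add i1 i2,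
    integral_const_mul, integral_const_mul, integral_const_mul,
    exp_int _ (by linarith : (0:ℝ) < 2*l₁), exp_int _ (by linarith : (0:ℝ) < 2*l₂),
    exp_int _ hs]
  field_simp
  ring
end

section
/- For exponential distributions with rates λ₁ and λ₂, the dynamic relative extropy for residual lifetimes is constant in t, equal to (1/4)(λ₁ + λ₂ - 4λ₁λ₂/(λ₁+λ₂)). -/
open MeasureTheory Set Real

/-!
Exponential laws are memoryless: the residual density `f(x) / F̄(t)` of an exponential law is
its density shifted by `t`, so the integral over `(t, ∞)` equals the one over `(0, ∞)`. Expanding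
the square there, each term is `∫₀^∞ a e^{-a x} b e^{-b x} dx = ab / (a + b)`.
-/

theorem setIntegral_Ioi_comp_sub {E : Type*} [NormedAddCommGroup E] [NormedSpace ℝ E]
    (f : ℝ → E) (t : ℝ) : ∫ x in Ioi t, f (x - t) = ∫ x in Ioi 0, f x := by
  simpa [preimage_sub_const_Ioi] using
    (measurePreserving_sub_right volume t).setIntegral_preimage_emb
      (measurableEmbedding_subRight t) f (Ioi 0)

noncomputable def expDensity (l x : ℝ) : ℝ := l * exp (-l * x)

theorem expDensity_sub (l x t : ℝ) :
    expDensity l (x - t) = l * exp (-l * x) / exp (-l * t) := by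
  rw [expDensity, mul_div_assoc, ← exp_sub]
  ring_nf

theorem expDensity_mul_expDensity (a b x : ℝ) :
    expDensity a x * expDensity b x = a * b * exp (-(a + b) * x) := by
  rw [expDensity, expDensity, neg_add, add_mul, exp_add]
  ring

theorem integrableOn_expDensity_mul_expDensity {a b : ℝ} (ha : 0 < a) (hb : 0 < b) :
    IntegrableOn (fun x ↦ expDensity a x * expDensity b x) (Ioi 0) := by
  simp_rw [expDensity_mul_expDensity]
  exact (integrableOn_exp_mul_Ioi (by linarith) 0).const_mul _

theorem integral_expDensity_mul_expDensity {a b : ℝ} (ha : 0 < a) (hb : 0 < b) :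
    ∫ x in Ioi 0, expDensity a x * expDensity b x = a * b / (a + b) := by
  simp_rw [expDensity_mul_expDensity]
  rw [integral_const_mul, integral_exp_mul_Ioi (by linarith) 0, mul_zero, exp_zero]
  field_simp

theorem integral_sq_expDensity_sub {a b : ℝ} (ha : 0 < a) (hb : 0 < b) :
    ∫ x in Ioi 0, (expDensity a x - expDensity b x) ^ 2
      = a / 2 + b / 2 - 2 * (a * b / (a + b)) := by
  have hab := integrableOn_expDensity_mul_expDensity ha hb
  have haa := integrableOn_expDensity_mul_expDensity ha ha
  have hbb := integrableOn_expDensity_mul_expDensity hb hb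
  have expand : ∀ f g : ℝ, (f - g) ^ 2 = f * f + g * g - 2 * (f * g) := fun f g ↦ by ring
  simp_rw [expand]
  rw [integral_sub _ (hab.const_mul 2), integral_add haa hbb, integral_const_mul,
    integral_expDensity_mul_expDensity ha ha, integral_expDensity_mul_expDensity hb hb,
    integral_expDensity_mul_expDensity ha hb]
  · field_simp
    ring
  · exact haa.add hbb

/-- For exponential distributions with rates `λ₁, λ₂ > 0`, the dynamic relative
extropy for residual lifetimes is constant in `t`, equal to
`(1/4)(λ₁ + λ₂ - 4λ₁λ₂/(λ₁+λ₂))`. -/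
theorem dynamic_relative_extropy_exponential_constant
    (l₁ l₂ : ℝ) (h₁ : 0 < l₁) (h₂ : 0 < l₂) :
    ∀ t : ℝ, 0 ≤ t →
      (1/2) * ∫ x in Ioi t,
          (l₁ * Real.exp (-l₁ * x) / Real.exp (-l₁ * t)
            - l₂ * Real.exp (-l₂ * x) / Real.exp (-l₂ * t)) ^ 2
        = (1/4) * (l₁ + l₂ - 4 * l₁ * l₂ / (l₁ + l₂)) := by
  intro t _
  simp_rw [← expDensity_sub]
  rw [setIntegral_Ioi_comp_sub (fun y ↦ (expDensity l₁ y - expDensity l₂ y) ^ 2) t,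
    integral_sq_expDensity_sub h₁ h₂]
  ring
end

section
/- The dynamic extropy inaccuracy satisfies the differential equation d/dt ξJ_r(X,Y,t) = h_X(t)h_Y(t)/2 + (h_X(t)+h_Y(t)) ξJ_r(X,Y,t), where h_X and h_Y are the hazard rates. -/
open MeasureTheory Set

/-- When `v`, `w` are survival functions with densities `a`, `b`, the coefficients `a / v t` and
`b / w t` are their hazard rates. -/
theorem HasDerivAt.div_mul_of_hasDerivAt_neg {u v w : ℝ → ℝ} {u' a b t : ℝ}
    (hu : HasDerivAt u u' t) (hv : HasDerivAt v (-a) t) (hw : HasDerivAt w (-b) t)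
    (hv₀ : v t ≠ 0) (hw₀ : w t ≠ 0) :
    HasDerivAt (fun s => u s / (v s * w s))
      (u' / (v t * w t) + (a / v t + b / w t) * (u t / (v t * w t))) t := by
  refine (hu.div (hv.mul hw) (mul_ne_zero hv₀ hw₀)).congr_deriv ?_
  simp only [Pi.mul_apply]
  field_simp
  ring

/-- The dynamic extropy inaccuracy
`ξJ_r(X,Y,t) = -(1/2)(∫_t^∞ f g)/(F̄(t)Ḡ(t))` satisfies
`d/dt ξJ_r = h_X h_Y / 2 + (h_X + h_Y) ξJ_r` where `h_X = f/F̄`, `h_Y = g/Ḡ`. -/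
theorem dynamic_inaccuracy_ode
    (f g Fbar Gbar : ℝ → ℝ) (t : ℝ)
    (hF : 0 < Fbar t) (hG : 0 < Gbar t)
    (hF' : HasDerivAt Fbar (-(f t)) t)
    (hG' : HasDerivAt Gbar (-(g t)) t)
    (hI : HasDerivAt (fun s => ∫ x in Ioi s, f x * g x) (-(f t * g t)) t) :
    HasDerivAt (fun s => -(1/2) * (∫ x in Ioi s, f x * g x) / (Fbar s * Gbar s))
      ((f t / Fbar t) * (g t / Gbar t) / 2
        + (f t / Fbar t + g t / Gbar t)
          * (-(1/2) * (∫ x in Ioi t, f x * g x) / (Fbar t * Gbar t))) t := by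
  refine ((hI.const_mul (-(1/2) : ℝ)).div_mul_of_hasDerivAt_neg hF' hG' hF.ne' hG.ne').congr_deriv ?_
  field_simp
end

section
/- If X is exponential with rate λ and the dynamic residual extropy divergence J_r(f_t|g_t) equals a constant k with 4k + λ ≠ 0, then h_Y(t) = (λ² - 4kλ)/(4k + λ) is constant, so Y is exponential. -/
/-- If `X` is exponential with rate `λ` (so `h_X = λ`, `J_t(X) = -λ/4`) and the
dynamic residual extropy divergence `J_r(f_t|g_t)` (satisfying the ODE
`J' = (h_X + h_Y) J + (h_Y - h_X)(h_X/2 + J_t(X))`) is constant `k` with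
`4k + λ ≠ 0`, then `h_Y(t) = (λ² - 4kλ)/(4k + λ)` is constant, so `Y` is
exponential. -/
theorem hazard_eq_of_divergence_constant
    (l k : ℝ) (hl : 0 < l) (hY J : ℝ → ℝ)
    (hode : ∀ t, HasDerivAt J
      ((l + hY t) * J t + (hY t - l) * (l / 2 + (-l / 4))) t)
    (hconst : ∀ t, J t = k)
    (hk : 4 * k + l ≠ 0) :
    ∀ t : ℝ, hY t = (l ^ 2 - 4 * k * l) / (4 * k + l) := by
  intro t
  have hJ : J = fun _ => k := funext hconst
  have h0 : HasDerivAt J 0 t := by rw [hJ]; exact hasDerivAt_const t k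
  have heq := (hode t).unique h0
  rw [hconst t] at heq
  field_simp
  nlinarith [heq]
end

section
/- If d_r(f,g,t) is nondecreasing in t, then d_r(f,g,t) ≥ ((h_X(t)-h_Y(t))/(h_X(t)+h_Y(t)))(J_t(X)-J_t(Y)) wherever h_X(t)+h_Y(t) > 0. -/
/-- If `d_r(f,g,t)` is nondecreasing and satisfies the ODE
`d' - (h_X + h_Y) d = (h_Y - h_X)(J_X - J_Y) - (1/2)(h_X + h_Y)²`, then
`d_r(f,g,t) ≥ ((h_X - h_Y)/(h_X + h_Y))(J_X - J_Y)` wherever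
`h_X(t) + h_Y(t) > 0`. -/
theorem dynamic_relative_extropy_lower_bound
    (hX hY JX JY d : ℝ → ℝ)
    (hode : ∀ t, HasDerivAt d
      ((hX t + hY t) * d t + (hY t - hX t) * (JX t - JY t)
        - (1/2) * (hX t + hY t) ^ 2) t)
    (hmono : Monotone d) :
    ∀ t, 0 < hX t + hY t →
      ((hX t - hY t) / (hX t + hY t)) * (JX t - JY t) ≤ d t := by
  intro t ht
  have hd : 0 ≤ (hX t + hY t) * d t + (hY t - hX t) * (JX t - JY t)
      - (1/2) * (hX t + hY t) ^ 2 := by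
    have hs : Filter.Tendsto (slope d t) (nhdsWithin t (Set.Ioi t)) (nhds _) :=
      ((hasDerivAt_iff_tendsto_slope.1 (hode t)).mono_left
        (nhdsWithin_mono t (fun x hx => ne_of_gt hx)))
    refine ge_of_tendsto hs ?_
    filter_upwards [self_mem_nhdsWithin] with x hx
    rw [slope_def_field, div_eq_inv_mul, ← div_eq_inv_mul]; exact div_nonneg (sub_nonneg.2 (hmono (le_of_lt hx))) (sub_nonneg.2 (le_of_lt hx))
  rw [div_mul_eq_mul_div, div_le_iff₀ ht]
  nlinarith [sq_nonneg (hX t + hY t)]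
end
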